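/- arXiv:2010.01986 — 2 statements merged into one kernel-verified Lean document; each statement's English description precedes it below -/
import Mathlib

section
/- For p ≥ 2 and κ ≥ p/2, the Bessel ratio satisfies exp(-p/(2κ)) ≤ A_p(κ) ≤ exp(-α_0 (p-1)/(2κ)), where α_0 = -log(√2 - 1). -/
open Real

/-- Modified Bessel function of the first kind, `I_v(κ)`. -/
noncomputable def besselI (v κ : ℝ) : ℝ :=
  ∑' q : ℕ, (1 / (q.factorial * Real.Gamma (q + v + 1))) * (κ / 2) ^ ((2 * q : ℝ) + v)

/-- The Bessel ratio `A_p(κ) = I_{p/2}(κ) / I_{p/2-1}(κ)`. -/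
noncomputable def Ap (p : ℕ) (κ : ℝ) : ℝ :=
  besselI (p / 2 : ℝ) κ / besselI ((p / 2 : ℝ) - 1) κ

/-!
Write `I_v(κ) = (κ/2)^v S_v((κ/2)^2)` with `S_v(t) = ∑ t^q / (q! Γ(q+v+1))`. The
Chu–Vandermonde identity gives the Cauchy products `S_a S_b` in closed form, and comparing
coefficients shows, for `A = S_{ν-1}(t)` and `B = S_ν(t)`,
`(2ν-1) A B + 2 t B² ≤ 2 A² ≤ (2ν-1) A B + 2 t B² + ν B²`.
For `ν = p/2` and `r = A_p(κ) = (κ/2) B / A` these read `κ r² + (2ν-1) r ≤ κ` and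
`κ² ≤ (κ² + 2ν) r² + (2ν-1) κ r`, with both quadratics increasing for `r ≥ 0`. The first
gives Amos' bound `r ≤ √(1+s²) - s = exp(-arsinh s)` with `s = (2ν-1)/(2κ) ∈ [0,1]`, and
concavity of `arsinh` gives `arsinh s ≥ s · arsinh 1 = s α₀`. The second is reversed at
`r = exp(-ν/κ)` once `κ ≥ ν`, by `exp x ≥ 1 + x + x²/2`.
-/

open Finset Nat

noncomputable def besselCoeff (v : ℝ) (q : ℕ) : ℝ := 1 / (q ! * Gamma (q + v + 1))

noncomputable def besselSeries (v t : ℝ) : ℝ := ∑' q : ℕ, besselCoeff v q * t ^ q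

section Coeff

variable {v : ℝ}

lemma besselCoeff_pos (hv : 0 ≤ v) (q : ℕ) : 0 < besselCoeff v q := by
  have := Gamma_pos_of_pos (by positivity : (0 : ℝ) < q + v + 1)
  unfold besselCoeff
  positivity

lemma besselCoeff_succ (hv : 0 ≤ v) (q : ℕ) :
    besselCoeff v (q + 1) = besselCoeff v q / ((q + 1) * (q + v + 1)) := by
  have := Gamma_pos_of_pos (by positivity : (0 : ℝ) < q + v + 1)
  unfold besselCoeff
  rw [cast_succ, show (q : ℝ) + 1 + v + 1 = (q + v + 1) + 1 by ring,
    Gamma_add_one (by positivity), factorial_succ, cast_mul, cast_succ]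
  field_simp

lemma besselCoeff_le_div_factorial (hv : 0 ≤ v) (q : ℕ) :
    besselCoeff v q ≤ besselCoeff v 0 / q ! := by
  induction q with
  | zero => simp
  | succ q ih =>
    have hq : (q + 1 : ℝ) ≤ (q + 1) * (q + v + 1) := by nlinarith
    calc besselCoeff v (q + 1) = besselCoeff v q / ((q + 1) * (q + v + 1)) :=
          besselCoeff_succ hv q
      _ ≤ besselCoeff v q / (q + 1) :=
          div_le_div_of_nonneg_left (besselCoeff_pos hv q).le (by positivity) hq
      _ ≤ besselCoeff v 0 / q ! / (q + 1) := by gcongr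
      _ = besselCoeff v 0 / (q + 1) ! := by
          rw [factorial_succ, cast_mul, div_div, mul_comm]; push_cast; ring

lemma summable_norm_besselCoeff_mul_pow (hv : 0 ≤ v) (t : ℝ) :
    Summable fun q ↦ ‖besselCoeff v q * t ^ q‖ := by
  refine .of_nonneg_of_le (fun _ ↦ norm_nonneg _) (fun q ↦ ?_)
    ((summable_pow_div_factorial |t|).mul_left (besselCoeff v 0))
  rw [norm_mul, norm_pow, Real.norm_of_nonneg (besselCoeff_pos hv q).le, norm_eq_abs,
    mul_div_assoc', div_eq_mul_inv, mul_right_comm, ← div_eq_mul_inv]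
  exact mul_le_mul_of_nonneg_right (besselCoeff_le_div_factorial hv q) (by positivity)

lemma besselSeries_pos (hv : 0 ≤ v) {t : ℝ} (ht : 0 ≤ t) : 0 < besselSeries v t :=
  (summable_norm_besselCoeff_mul_pow hv t).of_norm.tsum_pos
    (fun q ↦ mul_nonneg (besselCoeff_pos hv q).le (pow_nonneg ht q)) 0
    (by simpa using besselCoeff_pos hv 0)

lemma besselI_eq_rpow_mul_besselSeries {κ : ℝ} (hκ : 0 < κ) :
    besselI v κ = (κ / 2) ^ v * besselSeries v ((κ / 2) ^ 2) := by
  rw [besselI, besselSeries, ← tsum_mul_left]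
  refine tsum_congr fun q ↦ ?_
  rw [rpow_add (by positivity), show (2 * q : ℝ) = ((2 * q : ℕ) : ℝ) by push_cast; ring,
    rpow_natCast, pow_mul, besselCoeff]
  ring

end Coeff

lemma Real.Gamma_add_nat_eq_ascPochhammer_mul {y : ℝ} (hy : 0 < y) (n : ℕ) :
    Gamma (y + n) = (ascPochhammer ℝ n).eval y * Gamma y := by
  induction n with
  | zero => simp
  | succ n ih =>
    rw [cast_succ, ← add_assoc, Gamma_add_one (by positivity), ih, ascPochhammer_succ_right,
      Polynomial.eval_mul, Polynomial.eval_add, Polynomial.eval_X, Polynomial.eval_natCast]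
    ring

lemma Ring.choose_eq_Gamma_div {r : ℝ} {n : ℕ} (h : 0 < r - n + 1) :
    Ring.choose r n = Gamma (r + 1) / (n ! * Gamma (r - n + 1)) := by
  have hchoose := Ring.descPochhammer_eq_factorial_smul_choose r n
  rw [Polynomial.descPochhammer_smeval_eq_ascPochhammer, Polynomial.ascPochhammer_smeval_eq_eval,
    nsmul_eq_mul] at hchoose
  have hΓ := Gamma_add_nat_eq_ascPochhammer_mul h n
  rw [show r - n + 1 + n = r + 1 by ring, hchoose] at hΓ
  have := Gamma_pos_of_pos h
  rw [hΓ]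
  field_simp

noncomputable def besselProdCoeff (a b : ℝ) (k : ℕ) : ℝ :=
  Gamma (a + b + 2 * k + 1) /
    (k ! * Gamma (a + k + 1) * Gamma (b + k + 1) * Gamma (a + b + k + 1))

section Convolution

variable {a b : ℝ}

lemma choose_mul_choose_eq_besselCoeff_mul (ha : 0 ≤ a) (hb : 0 ≤ b) {i k : ℕ}
    (hik : i ≤ k) :
    Ring.choose (b + k) i * Ring.choose (a + k) (k - i) =
      Gamma (a + k + 1) * Gamma (b + k + 1) * (besselCoeff a i * besselCoeff b (k - i)) := by
  have hcast : ((k - i : ℕ) : ℝ) = k - i := cast_sub hik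
  have hki : (i : ℝ) ≤ k := by exact_mod_cast hik
  rw [Ring.choose_eq_Gamma_div (by linarith), Ring.choose_eq_Gamma_div (by rw [hcast]; linarith),
    besselCoeff, besselCoeff, show a + k - (k - i : ℕ) + 1 = i + a + 1 by rw [hcast]; ring,
    show b + k - i + 1 = (k - i : ℕ) + b + 1 by rw [hcast]; ring]
  have := Gamma_pos_of_pos (by positivity : (0 : ℝ) < i + a + 1)
  have := Gamma_pos_of_pos (by positivity : (0 : ℝ) < (k - i : ℕ) + b + 1)
  field_simp

lemma sum_besselCoeff_mul_besselCoeff (ha : 0 ≤ a) (hb : 0 ≤ b) (k : ℕ) :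
    ∑ i ∈ range (k + 1), besselCoeff a i * besselCoeff b (k - i) = besselProdCoeff a b k := by
  have hvandermonde := Ring.add_choose_eq (r := b + (k : ℝ)) (s := a + k) k (.all _ _)
  rw [Nat.sum_antidiagonal_eq_sum_range_succ_mk,
    sum_congr rfl fun i hi ↦
      choose_mul_choose_eq_besselCoeff_mul ha hb (mem_range_succ_iff.mp hi),
    ← mul_sum, Ring.choose_eq_Gamma_div (by linarith)] at hvandermonde
  have := Gamma_pos_of_pos (by positivity : (0 : ℝ) < a + k + 1)
  have := Gamma_pos_of_pos (by positivity : (0 : ℝ) < b + k + 1)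
  rw [besselProdCoeff, eq_div_iff (by positivity)]
  rw [show b + k + (a + k) + 1 = a + b + 2 * k + 1 by ring,
    show b + k + (a + k) - k + 1 = a + b + k + 1 by ring] at hvandermonde
  have := Gamma_pos_of_pos (by positivity : (0 : ℝ) < a + b + k + 1)
  field_simp at hvandermonde
  linear_combination -hvandermonde

lemma hasSum_besselProdCoeff_mul_pow (ha : 0 ≤ a) (hb : 0 ≤ b) (t : ℝ) :
    HasSum (fun n ↦ besselProdCoeff a b n * t ^ n) (besselSeries a t * besselSeries b t) := by
  refine (hasSum_sum_range_mul_of_summable_norm (summable_norm_besselCoeff_mul_pow ha t)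
    (summable_norm_besselCoeff_mul_pow hb t)).congr_fun fun n ↦ ?_
  rw [← sum_besselCoeff_mul_besselCoeff ha hb, sum_mul]
  refine sum_congr rfl fun i hi ↦ ?_
  rw [← pow_mul_pow_sub t (mem_range_succ_iff.mp hi)]
  ring

end Convolution

section ProdCoeff

variable {a b : ℝ}

lemma besselProdCoeff_pos (ha : 0 ≤ a) (hb : 0 ≤ b) (k : ℕ) : 0 < besselProdCoeff a b k := by
  have := Gamma_pos_of_pos (by positivity : (0 : ℝ) < a + b + 2 * k + 1)
  have := Gamma_pos_of_pos (by positivity : (0 : ℝ) < a + k + 1)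
  have := Gamma_pos_of_pos (by positivity : (0 : ℝ) < b + k + 1)
  have := Gamma_pos_of_pos (by positivity : (0 : ℝ) < a + b + k + 1)
  unfold besselProdCoeff
  positivity

lemma besselProdCoeff_comm (a b : ℝ) (k : ℕ) :
    besselProdCoeff a b k = besselProdCoeff b a k := by
  simp only [besselProdCoeff, add_comm a b]
  ring

lemma besselProdCoeff_add_one_right (ha : 0 ≤ a) (hb : 0 ≤ b) (k : ℕ) :
    besselProdCoeff a (b + 1) k * ((b + k + 1) * (a + b + k + 1)) =
      besselProdCoeff a b k * (a + b + 2 * k + 1) := by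
  have h₁ : (0 : ℝ) < a + b + 2 * k + 1 := by positivity
  have h₂ : (0 : ℝ) < b + k + 1 := by positivity
  have h₃ : (0 : ℝ) < a + b + k + 1 := by positivity
  have := Gamma_pos_of_pos (by positivity : (0 : ℝ) < a + k + 1)
  have := Gamma_pos_of_pos h₂
  have := Gamma_pos_of_pos h₃
  unfold besselProdCoeff
  rw [show a + (b + 1) + 2 * k + 1 = (a + b + 2 * k + 1) + 1 by ring,
    show b + 1 + k + 1 = (b + k + 1) + 1 by ring,
    show a + (b + 1) + k + 1 = (a + b + k + 1) + 1 by ring,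
    Gamma_add_one h₁.ne', Gamma_add_one h₂.ne', Gamma_add_one h₃.ne']
  field_simp

lemma besselProdCoeff_add_one_add_one (ha : 0 ≤ a) (hb : 0 ≤ b) (k : ℕ) :
    besselProdCoeff (a + 1) (b + 1) k * (a + b + k + 2) =
      (k + 1) * besselProdCoeff a b (k + 1) := by
  have h : (0 : ℝ) < a + b + k + 2 := by positivity
  have := Gamma_pos_of_pos (by positivity : (0 : ℝ) < a + k + 2)
  have := Gamma_pos_of_pos (by positivity : (0 : ℝ) < b + k + 2)
  have := Gamma_pos_of_pos h
  unfold besselProdCoeff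
  rw [show a + 1 + (b + 1) + k + 1 = (a + b + k + 2) + 1 by ring, Gamma_add_one h.ne',
    factorial_succ, cast_mul, cast_succ]
  ring_nf
  field_simp

end ProdCoeff

lemma coeff_bounds_of_recurrences {ν x P Q R S : ℝ} (hν : 1 / 2 < ν) (hx : 0 ≤ x)
    (hP : 0 ≤ P)
    (hQ : Q * ((ν + x) * (2 * ν - 1 + x)) = P * (2 * ν - 1 + 2 * x))
    (hR : R * ((ν + x) * (2 * ν + x)) = Q * (2 * ν + 2 * x))
    (hS : S * (2 * ν - 1 + x) = x * P) :
    (2 * ν - 1) * Q + 2 * S ≤ 2 * P ∧ 2 * P ≤ (2 * ν - 1) * Q + 2 * S + ν * R := by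
  have hd : 0 < (ν + x) * (2 * ν - 1 + x) := by nlinarith
  have hd' : 0 < (ν + x) * (2 * ν - 1 + x) * (2 * ν + x) := by nlinarith
  have key₁ : (2 * P - ((2 * ν - 1) * Q + 2 * S)) * ((ν + x) * (2 * ν - 1 + x)) =
      (2 * ν - 1) * P := by
    linear_combination (1 - 2 * ν) * hQ - 2 * (ν + x) * hS
  have key₂ : ((2 * ν - 1) * Q + 2 * S + ν * R - 2 * P) *
      ((ν + x) * (2 * ν - 1 + x) * (2 * ν + x)) = (2 * ν + 1) * x * P := by
    linear_combination ((2 * ν - 1) * (2 * ν + x) + 2 * ν) * hQ + ν * (2 * ν - 1 + x) * hR +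
      2 * (ν + x) * (2 * ν + x) * hS
  constructor
  · refine sub_nonneg.mp (nonneg_of_mul_nonneg_left ?_ hd)
    rw [key₁]; nlinarith
  · refine sub_nonneg.mp (nonneg_of_mul_nonneg_left ?_ hd')
    rw [key₂]; positivity

lemma besselSeries_quadratic_bounds {ν t : ℝ} (hν : 1 ≤ ν) (ht : 0 ≤ t) :
    (2 * ν - 1) * (besselSeries (ν - 1) t * besselSeries ν t) +
        2 * (t * (besselSeries ν t * besselSeries ν t)) ≤
      2 * (besselSeries (ν - 1) t * besselSeries (ν - 1) t) ∧
    2 * (besselSeries (ν - 1) t * besselSeries (ν - 1) t) ≤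
      (2 * ν - 1) * (besselSeries (ν - 1) t * besselSeries ν t) +
        2 * (t * (besselSeries ν t * besselSeries ν t)) +
        ν * (besselSeries ν t * besselSeries ν t) := by
  have hν₀ : 0 ≤ ν - 1 := by linarith
  have hν₁ : 0 ≤ ν := by linarith
  set P := besselProdCoeff (ν - 1) (ν - 1)
  set Q := besselProdCoeff (ν - 1) ν
  set R := besselProdCoeff ν ν
  -- `S (n + 1) = R n` by `besselProdCoeff_add_one_add_one`, so `∑ S n t ^ n` sums to `t B²`
  set S : ℕ → ℝ := fun n ↦ n * P n / (2 * ν - 1 + n)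
  have hAA := hasSum_besselProdCoeff_mul_pow hν₀ hν₀ t
  have hAB := hasSum_besselProdCoeff_mul_pow hν₀ hν₁ t
  have hBB := hasSum_besselProdCoeff_mul_pow hν₁ hν₁ t
  have htBB : HasSum (fun n ↦ S n * t ^ n) (t * (besselSeries ν t * besselSeries ν t)) := by
    refine (hasSum_nat_add_iff' 1).mp ?_
    simp only [range_one, sum_singleton, S, cast_zero, zero_mul, zero_div, sub_zero]
    refine (hBB.mul_left t).congr_fun fun n ↦ ?_
    have h := besselProdCoeff_add_one_add_one hν₀ hν₀ n
    rw [sub_add_cancel] at h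
    have hd : (0 : ℝ) < 2 * ν - 1 + (n + 1) := by linarith [n.cast_nonneg (α := ℝ)]
    rw [show ν - 1 + (ν - 1) + (n : ℝ) + 2 = 2 * ν - 1 + (n + 1) by ring] at h
    simp only [P, cast_succ, ← h, mul_div_assoc, div_self hd.ne', pow_succ]
    ring
  have hcoeff : ∀ n : ℕ, (2 * ν - 1) * Q n + 2 * S n ≤ 2 * P n ∧
      2 * P n ≤ (2 * ν - 1) * Q n + 2 * S n + ν * R n := by
    intro n
    have hQ := besselProdCoeff_add_one_right hν₀ hν₀ n
    have hR := besselProdCoeff_add_one_right hν₁ hν₀ n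
    rw [sub_add_cancel] at hQ hR
    rw [besselProdCoeff_comm ν (ν - 1)] at hR
    refine coeff_bounds_of_recurrences (by linarith) n.cast_nonneg
      (besselProdCoeff_pos hν₀ hν₀ n).le ?_ ?_ ?_
    · linear_combination hQ
    · linear_combination hR
    · exact div_mul_cancel₀ _ (by linarith [n.cast_nonneg (α := ℝ)])
  constructor
  · refine hasSum_le (fun n ↦ ?_) ((hAB.mul_left _).add (htBB.mul_left 2)) (hAA.mul_left 2)
    have := mul_le_mul_of_nonneg_right (hcoeff n).1 (pow_nonneg ht n)
    linarith
  · refine hasSum_le (fun n ↦ ?_) (hAA.mul_left 2)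
      (((hAB.mul_left _).add (htBB.mul_left 2)).add (hBB.mul_left ν))
    have := mul_le_mul_of_nonneg_right (hcoeff n).2 (pow_nonneg ht n)
    linarith

noncomputable def besselRatio (ν κ : ℝ) : ℝ := besselI ν κ / besselI (ν - 1) κ

lemma besselRatio_eq_besselSeries_div {ν κ : ℝ} (hκ : 0 < κ) :
    besselRatio ν κ =
      κ / 2 * besselSeries ν ((κ / 2) ^ 2) / besselSeries (ν - 1) ((κ / 2) ^ 2) := by
  have hh : 0 < κ / 2 := by positivity
  rw [besselRatio, besselI_eq_rpow_mul_besselSeries hκ, besselI_eq_rpow_mul_besselSeries hκ,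
    rpow_sub_one hh.ne', mul_div_mul_comm, div_div_cancel₀ (rpow_pos_of_pos hh ν).ne',
    mul_div_assoc]

lemma besselRatio_pos {ν κ : ℝ} (hν : 1 ≤ ν) (hκ : 0 < κ) : 0 < besselRatio ν κ := by
  rw [besselRatio_eq_besselSeries_div hκ]
  have := besselSeries_pos (by linarith : 0 ≤ ν) (by positivity : 0 ≤ (κ / 2) ^ 2)
  have := besselSeries_pos (by linarith : 0 ≤ ν - 1) (by positivity : 0 ≤ (κ / 2) ^ 2)
  positivity

lemma besselRatio_quadratic_bounds {ν κ : ℝ} (hν : 1 ≤ ν) (hκ : 0 < κ) :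
    κ * besselRatio ν κ ^ 2 + (2 * ν - 1) * besselRatio ν κ ≤ κ ∧
      κ ^ 2 ≤
        (κ ^ 2 + 2 * ν) * besselRatio ν κ ^ 2 + (2 * ν - 1) * κ * besselRatio ν κ := by
  rw [besselRatio_eq_besselSeries_div hκ]
  set t := (κ / 2) ^ 2 with ht
  set A := besselSeries (ν - 1) t
  set B := besselSeries ν t
  have hA : 0 < A := besselSeries_pos (by linarith) (by positivity)
  obtain ⟨hupper, hlower⟩ := besselSeries_quadratic_bounds hν (by positivity : 0 ≤ t)
  set r := κ / 2 * B / A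
  have hr : r * A = κ / 2 * B := div_mul_cancel₀ _ hA.ne'
  have key₁ : A ^ 2 * (κ - (κ * r ^ 2 + (2 * ν - 1) * r)) =
      κ / 2 * (2 * (A * A) - ((2 * ν - 1) * (A * B) + 2 * (t * (B * B)))) := by
    rw [ht]
    linear_combination (-κ * (r * A + κ / 2 * B) - (2 * ν - 1) * A) * hr
  have key₂ : A ^ 2 * ((κ ^ 2 + 2 * ν) * r ^ 2 + (2 * ν - 1) * κ * r - κ ^ 2) =
      κ ^ 2 / 2 * ((2 * ν - 1) * (A * B) + 2 * (t * (B * B)) + ν * (B * B) - 2 * (A * A)) := by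
    rw [ht]
    linear_combination ((κ ^ 2 + 2 * ν) * (r * A + κ / 2 * B) + (2 * ν - 1) * κ * A) * hr
  refine ⟨sub_nonneg.mp (nonneg_of_mul_nonneg_right ?_ (pow_pos hA 2)),
    sub_nonneg.mp (nonneg_of_mul_nonneg_right ?_ (pow_pos hA 2))⟩
  · rw [key₁]; exact mul_nonneg (by positivity) (by linarith)
  · rw [key₂]; exact mul_nonneg (by positivity) (by linarith)

lemma le_of_quadratic_le {a b x y : ℝ} (ha : 0 < a) (hb : 0 ≤ b) (hy : 0 ≤ y)
    (h : a * x ^ 2 + b * x ≤ a * y ^ 2 + b * y) : x ≤ y := by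
  by_contra! hxy
  nlinarith [mul_pos (sub_pos.mpr hxy) (by nlinarith : 0 < a * (x + y) + b)]

lemma quadratic_exp_neg_div_le {ν κ : ℝ} (hν : 1 ≤ ν) (hνκ : ν ≤ κ) :
    (κ ^ 2 + 2 * ν) * exp (-(ν / κ)) ^ 2 + (2 * ν - 1) * κ * exp (-(ν / κ)) ≤ κ ^ 2 := by
  have hκ : 0 < κ := by linarith
  set y := κ * exp (ν / κ)
  have hy : 2 * κ ^ 2 + 2 * κ * ν + ν ^ 2 ≤ 2 * κ * y := by
    have := mul_le_mul_of_nonneg_left (quadratic_le_exp_of_nonneg (by positivity : 0 ≤ ν / κ))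
      (by positivity : 0 ≤ 2 * κ ^ 2)
    field_simp at this
    linarith
  -- `y² - (2ν-1) y` increases past `y₀ = κ + ν + ν²/(2κ)`, and at `y₀` the claim needs `ν ≤ κ`
  have hy' : κ ^ 2 + 2 * ν + (2 * ν - 1) * y ≤ y ^ 2 := by
    have hmono : 2 * κ * (2 * ν - 1) ≤ 2 * κ * y + (2 * κ ^ 2 + 2 * κ * ν + ν ^ 2) := by
      nlinarith
    nlinarith [mul_nonneg (sub_nonneg.mpr hy) (sub_nonneg.mpr hmono),
      mul_nonneg (sq_nonneg κ) (sub_nonneg.mpr hνκ)]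
  have he : exp (-(ν / κ)) * y = κ := by
    rw [exp_neg, mul_left_comm, inv_mul_cancel₀ (exp_pos _).ne', mul_one]
  calc (κ ^ 2 + 2 * ν) * exp (-(ν / κ)) ^ 2 + (2 * ν - 1) * κ * exp (-(ν / κ))
      = exp (-(ν / κ)) ^ 2 * (κ ^ 2 + 2 * ν + (2 * ν - 1) * y) := by
        linear_combination (-(2 * ν - 1) * exp (-(ν / κ))) * he
    _ ≤ exp (-(ν / κ)) ^ 2 * y ^ 2 := mul_le_mul_of_nonneg_left hy' (sq_nonneg _)
    _ = κ ^ 2 := by rw [← mul_pow, he]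

lemma exp_neg_div_le_besselRatio {ν κ : ℝ} (hν : 1 ≤ ν) (hνκ : ν ≤ κ) :
    exp (-(ν / κ)) ≤ besselRatio ν κ := by
  have hκ : 0 < κ := by linarith
  have hlower := (besselRatio_quadratic_bounds hν hκ).2
  refine le_of_quadratic_le (a := κ ^ 2 + 2 * ν) (b := (2 * ν - 1) * κ) (by positivity)
    (by nlinarith) (besselRatio_pos hν hκ).le ?_
  linarith [quadratic_exp_neg_div_le hν hνκ]

lemma exp_neg_arsinh_sq_add (s : ℝ) : exp (-arsinh s) ^ 2 + 2 * s * exp (-arsinh s) = 1 := by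
  have hsqrt := sq_sqrt (by positivity : (0 : ℝ) ≤ 1 + s ^ 2)
  have hpos : 0 < s + √(1 + s ^ 2) := by rw [← exp_arsinh]; exact exp_pos _
  rw [exp_neg, exp_arsinh]
  field_simp
  nlinarith

lemma besselRatio_le_exp_neg_arsinh {ν κ : ℝ} (hν : 1 ≤ ν) (hκ : 0 < κ) :
    besselRatio ν κ ≤ exp (-arsinh ((2 * ν - 1) / (2 * κ))) := by
  have hupper := (besselRatio_quadratic_bounds hν hκ).1
  have h := exp_neg_arsinh_sq_add ((2 * ν - 1) / (2 * κ))
  have hs : 2 * ((2 * ν - 1) / (2 * κ)) * κ = 2 * ν - 1 := by field_simp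
  refine le_of_quadratic_le hκ (by linarith) (exp_pos _).le (hupper.trans_eq ?_)
  linear_combination (-κ) * h + exp (-arsinh ((2 * ν - 1) / (2 * κ))) * hs

lemma convexOn_sinh_Ici : ConvexOn ℝ (Set.Ici 0) sinh := by
  refine MonotoneOn.convexOn_of_deriv (convex_Ici 0) continuous_sinh.continuousOn
    differentiable_sinh.differentiableOn ?_
  rw [Real.deriv_sinh, interior_Ici]
  intro x hx y hy hxy
  exact cosh_le_cosh.mpr (by rwa [abs_of_pos hx, abs_of_pos hy])

lemma arsinh_one_mul_le_arsinh {s : ℝ} (h₀ : 0 ≤ s) (h₁ : s ≤ 1) :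
    arsinh 1 * s ≤ arsinh s := by
  rw [← sinh_le_sinh, sinh_arsinh]
  have := convexOn_sinh_Ici.2 (Set.mem_Ici.mpr le_rfl) (arsinh_nonneg_iff.mpr zero_le_one)
    (sub_nonneg.mpr h₁) h₀ (sub_add_cancel 1 s)
  simpa [sinh_arsinh, mul_comm] using this

lemma neg_log_sqrt_two_sub_one : -log (√2 - 1) = arsinh 1 := by
  have h : (√2 - 1)⁻¹ = 1 + √(1 + 1 ^ 2) := by
    refine inv_eq_of_mul_eq_one_right ?_
    norm_num
    ring_nf
    norm_num
  rw [← log_inv, h, arsinh]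

theorem stmt_6 (p : ℕ) (hp : 2 ≤ p) (κ : ℝ) (hκ : (p : ℝ) / 2 ≤ κ) :
    Real.exp (-(p : ℝ) / (2 * κ)) ≤ Ap p κ ∧
      Ap p κ ≤ Real.exp (-(-Real.log (Real.sqrt 2 - 1)) * ((p : ℝ) - 1) / (2 * κ)) := by
  have hp' : (2 : ℝ) ≤ p := by exact_mod_cast hp
  have hν : 1 ≤ (p : ℝ) / 2 := by linarith
  have hκ₀ : 0 < κ := by linarith
  change _ ≤ besselRatio _ κ ∧ besselRatio _ κ ≤ _
  constructor
  · convert exp_neg_div_le_besselRatio hν hκ using 2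
    ring
  · have hs : (2 * ((p : ℝ) / 2) - 1) / (2 * κ) = ((p : ℝ) - 1) / (2 * κ) := by ring
    refine (besselRatio_le_exp_neg_arsinh hν hκ₀).trans (exp_le_exp.mpr ?_)
    rw [neg_log_sqrt_two_sub_one, hs, neg_mul, neg_div, neg_le_neg_iff, mul_div_assoc]
    exact arsinh_one_mul_le_arsinh (div_nonneg (by linarith) (by linarith))
      ((div_le_one (by linarith)).mpr (by linarith))
end

section
/- For κ > 0 and p ≥ 2, it holds that 0 < A_p(κ) < 1, i.e., I_{p/2}(κ) < I_{p/2-1}(κ). -/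
open Real

lemma bessel_term_pos (v : ℝ) (hv : 0 ≤ v) (x : ℝ) (hx : 0 < x) (q : ℕ) :
    0 < (1 / (q.factorial * Real.Gamma (q + v + 1))) * x ^ ((2 * q : ℝ) + v) := by
  have h1 : (0:ℝ) < q.factorial := by exact_mod_cast q.factorial_pos
  have h2 : 0 < Real.Gamma (q + v + 1) := Real.Gamma_pos_of_pos (by positivity)
  positivity

lemma bessel_summable (v : ℝ) (hv : 0 ≤ v) (x : ℝ) (hx : 0 < x) :
    Summable (fun q : ℕ => (1 / (q.factorial * Real.Gamma (q + v + 1))) * x ^ ((2 * q : ℝ) + v)) := by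
  set f : ℕ → ℝ := fun q => (1 / (q.factorial * Real.Gamma (q + v + 1))) * x ^ ((2 * q : ℝ) + v) with hf
  have hpos : ∀ q, 0 < f q := fun q => bessel_term_pos v hv x hx q
  apply summable_of_ratio_norm_eventually_le (r := 1/2) (by norm_num)
  rw [Filter.eventually_atTop]
  refine ⟨⌈2 * x ^ 2⌉₊, fun q hq => ?_⟩
  have hq' : 2 * x ^ 2 ≤ (q:ℝ) + 1 := le_trans (Nat.le_ceil _) (by exact_mod_cast Nat.le_succ_of_le hq)
  have h1 : (0:ℝ) < q.factorial := by exact_mod_cast q.factorial_pos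
  have hqv : (0:ℝ) < (q:ℝ) + v + 1 := by positivity
  have h2 : 0 < Real.Gamma (q + v + 1) := Real.Gamma_pos_of_pos hqv
  have hfeq : f (q + 1) = f q * (x ^ 2 / (((q:ℝ) + 1) * ((q:ℝ) + v + 1))) := by
    have hfact : (((q+1).factorial : ℕ) : ℝ) = ((q:ℝ) + 1) * q.factorial := by
      push_cast [Nat.factorial_succ]; ring
    have hG : Real.Gamma ((q:ℝ) + 1 + v + 1) = ((q:ℝ) + v + 1) * Real.Gamma ((q:ℝ) + v + 1) := by
      have := Real.Gamma_add_one (ne_of_gt hqv)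
      rw [show (q:ℝ) + 1 + v + 1 = ((q:ℝ) + v + 1) + 1 by ring, this]
    have hxp : x ^ ((2 * ((q:ℕ)+1) : ℝ) + v) = x ^ ((2 * (q:ℕ) : ℝ) + v) * x ^ 2 := by
      rw [show ((2 * ((q:ℕ)+1) : ℝ) + v) = ((2 * (q:ℕ) : ℝ) + v) + (2:ℝ) by push_cast; ring,
        Real.rpow_add hx, Real.rpow_two]
    simp only [hf]
    push_cast [hfact, hG] at *
    rw [hxp]
    field_simp
  rw [hfeq]
  have hnn := (hpos q).le
  rw [Real.norm_eq_abs, Real.norm_eq_abs, abs_of_nonneg hnn,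
    abs_of_nonneg (by positivity)]
  rw [mul_comm (1/2 : ℝ) (f q)]
  apply mul_le_mul_of_nonneg_left _ hnn
  rw [div_le_iff₀ (by positivity)]
  nlinarith [sq_nonneg x, hqv, hq']

lemma bessel_lt (v : ℝ) (hv : 1 ≤ v) (κ : ℝ) (hκ : 0 < κ) :
    besselI v κ < besselI (v - 1) κ := by
  set x : ℝ := κ / 2 with hxdef
  have hx : 0 < x := by positivity
  set f : ℕ → ℝ := fun q => (1 / (q.factorial * Real.Gamma (q + v + 1))) * x ^ ((2 * q : ℝ) + v) with hfdef
  set g : ℕ → ℝ := fun q => (1 / (q.factorial * Real.Gamma (q + (v - 1) + 1))) * x ^ ((2 * q : ℝ) + (v - 1)) with hgdef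
  have hv0 : (0:ℝ) ≤ v := by linarith
  have hv0' : (0:ℝ) ≤ v - 1 := by linarith
  have hfs : Summable f := bessel_summable v hv0 x hx
  have hgs : Summable g := bessel_summable (v - 1) hv0' x hx
  have hgpos : ∀ q, 0 < g q := fun q => bessel_term_pos (v-1) hv0' x hx q
  have hgs' : Summable (fun q : ℕ => g (q + 1)) := (summable_nat_add_iff 1).mpr hgs
  -- key termwise bound
  have key : ∀ q : ℕ, f q ≤ (g q + g (q + 1)) / 2 := by
    intro q
    have hqv : (0:ℝ) < (q:ℝ) + v := by positivity
    have hA : 0 < Real.Gamma ((q:ℝ) + v) := Real.Gamma_pos_of_pos hqv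
    have hG : Real.Gamma ((q:ℝ) + v + 1) = ((q:ℝ) + v) * Real.Gamma ((q:ℝ) + v) := by
      rw [Real.Gamma_add_one (ne_of_gt hqv)]
    have h1 : (0:ℝ) < q.factorial := by exact_mod_cast q.factorial_pos
    have hfact : (((q+1).factorial : ℕ) : ℝ) = ((q:ℝ) + 1) * q.factorial := by
      push_cast [Nat.factorial_succ]; ring
    have hX : (0:ℝ) < x ^ ((2 * (q:ℕ) : ℝ) + v - 1) := Real.rpow_pos_of_pos hx _
    have e1 : x ^ ((2 * (q:ℕ) : ℝ) + v) = x ^ ((2 * (q:ℕ) : ℝ) + v - 1) * x := by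
      have h := Real.rpow_add hx ((2 * (q:ℕ) : ℝ) + v - 1) 1
      rw [Real.rpow_one] at h
      rw [← h]; congr 1; ring
    have e2 : x ^ ((2 * ((q:ℝ)+1) : ℝ) + (v-1)) = x ^ ((2 * (q:ℕ) : ℝ) + v - 1) * (x * x) := by
      have h := Real.rpow_add hx ((2 * (q:ℕ) : ℝ) + v - 1) 2
      rw [Real.rpow_two, sq] at h
      rw [← h]; congr 1; push_cast; ring
    have e3 : x ^ ((2 * (q:ℝ)) + (v-1)) = x ^ ((2 * (q:ℕ) : ℝ) + v - 1) := by
      congr 1; push_cast; ring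
    simp only [hfdef, hgdef]
    push_cast
    rw [show ((q:ℝ) + 1 + (v-1) + 1) = (q:ℝ) + v + 1 by ring,
      show ((q:ℝ) + (v-1) + 1) = (q:ℝ) + v by ring, e1, e2, e3, hfact, hG]
    set X := x ^ ((2 * (q:ℕ) : ℝ) + v - 1) with hXdef
    set A := Real.Gamma ((q:ℝ) + v) with hAdef
    set F := ((q.factorial : ℕ) : ℝ) with hFdef
    set Q := (q : ℝ) with hQdef
    have hQ0 : 0 ≤ Q := Nat.cast_nonneg q
    have hkey : 2*((Q+1)*x) ≤ (Q+1)*(Q+v) + x*x := by nlinarith [sq_nonneg (x - (Q+1)), hqv, hQ0, hv]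
    rw [div_mul_eq_mul_div, one_mul, div_mul_eq_mul_div, one_mul, div_mul_eq_mul_div, one_mul,
      div_add_div _ _ (by positivity) (by positivity), div_div,
      div_le_div_iff₀ (by positivity) (by positivity)]
    nlinarith [mul_pos hX (mul_pos h1 hA), mul_pos (mul_pos hX hx) (mul_pos h1 hA),
      mul_le_mul_of_nonneg_left hkey (le_of_lt (mul_pos hX (mul_pos (mul_pos h1 h1) (mul_pos hA hA))))]
  have h2 : Summable (fun q : ℕ => (g q + g (q + 1)) / 2) := (hgs.add hgs').div_const 2
  have hle : ∑' q, f q ≤ ∑' q : ℕ, (g q + g (q + 1)) / 2 := Summable.tsum_le_tsum key hfs h2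
  have hsum : ∑' q : ℕ, (g q + g (q + 1)) / 2 = (∑' q, g q + ∑' q : ℕ, g (q + 1)) / 2 := by
    rw [show (fun q : ℕ => (g q + g (q + 1)) / 2) = fun q : ℕ => g q / 2 + g (q + 1) / 2 from
      funext fun q => by ring, Summable.tsum_add (hgs.div_const 2) (hgs'.div_const 2),
      tsum_div_const, tsum_div_const]
    ring
  have hshift : ∑' q, g q = g 0 + ∑' q : ℕ, g (q + 1) := Summable.tsum_eq_zero_add hgs
  have hIv : besselI v κ = ∑' q, f q := rfl
  have hIv1 : besselI (v - 1) κ = ∑' q, g q := rfl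
  have hg0 : 0 < g 0 := hgpos 0
  rw [hIv, hIv1]
  calc ∑' q, f q ≤ ∑' q : ℕ, (g q + g (q + 1)) / 2 := hle
    _ = (∑' q, g q + ∑' q : ℕ, g (q + 1)) / 2 := hsum
    _ < ∑' q, g q := by linarith


lemma besselI_pos (v : ℝ) (hv : 0 ≤ v) (κ : ℝ) (hκ : 0 < κ) : 0 < besselI v κ := by
  have hx : 0 < κ / 2 := by positivity
  exact Summable.tsum_pos (bessel_summable v hv _ hx)
    (fun q => (bessel_term_pos v hv _ hx q).le) 0 (bessel_term_pos v hv _ hx 0)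

theorem stmt_15 (p : ℕ) (hp : 2 ≤ p) (κ : ℝ) (hκ : 0 < κ) :
    0 < Ap p κ ∧ Ap p κ < 1 ∧ besselI (p / 2 : ℝ) κ < besselI ((p / 2 : ℝ) - 1) κ := by
  have hv : (1:ℝ) ≤ (p : ℝ) / 2 := by
    have : (2:ℝ) ≤ (p:ℝ) := by exact_mod_cast hp
    linarith
  have hlt : besselI ((p:ℝ) / 2) κ < besselI ((p:ℝ) / 2 - 1) κ := bessel_lt _ hv κ hκ
  have hpos1 : 0 < besselI ((p:ℝ) / 2) κ := besselI_pos _ (by linarith) κ hκ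
  have hpos2 : 0 < besselI ((p:ℝ) / 2 - 1) κ := besselI_pos _ (by linarith) κ hκ
  refine ⟨div_pos hpos1 hpos2, ?_, hlt⟩
  rw [Ap, div_lt_one hpos2]
  exact hlt
end
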